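/- arXiv:2405.15327 — 2 statements merged into one kernel-verified Lean document; each statement's English description precedes it below -/
import Mathlib

section
/- Let Ω ⊆ ℝ² be either the whole plane ℝ², a half-plane ℝ×(a,∞) or ℝ×(−∞,b) with a,b ∈ ℝ, or a strip ℝ×(a,b) with real a < b. Suppose v = (v₁,v₂) is C¹ on the closure of Ω and satisfies v₁∇v₂ − v₂∇v₁ = 0 and div v = ∂ₓ₁v₁ + ∂ₓ₂v₂ = 0 at every point of Ω, and that v₂ = 0 on every (finite) horizontal boundary line of Ω. Then v is a shear flow: there exist a unit vector e = (e₁,e₂) and a function w : ℝ → ℝ such that v(x) = w(−e₂x₁ + e₁x₂)·e for all x; moreover, if Ω ≠ ℝ² then v(x₁,x₂) = (w(x₂), 0) for some function w. -/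
open Real Set MeasureTheory Filter

noncomputable section

/-- Partial derivative in the `x₁` direction. -/
def pd₁ (f : ℝ × ℝ → ℝ) (x : ℝ × ℝ) : ℝ := fderiv ℝ f x (1, 0)

/-- Partial derivative in the `x₂` direction. -/
def pd₂ (f : ℝ × ℝ → ℝ) (x : ℝ × ℝ) : ℝ := fderiv ℝ f x (0, 1)

/-- Euclidean norm of the planar vector `(a, b)`. -/
def nrm (a b : ℝ) : ℝ := Real.sqrt (a ^ 2 + b ^ 2)

/-- The steady incompressible Euler system `v·∇v + ∇P = 0`, `div v = 0` on a set `Ω`. -/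
def EulerOn (v₁ v₂ P : ℝ × ℝ → ℝ) (Ω : Set (ℝ × ℝ)) : Prop :=
  ∀ x ∈ Ω,
    v₁ x * pd₁ v₁ x + v₂ x * pd₂ v₁ x + pd₁ P x = 0 ∧
    v₁ x * pd₁ v₂ x + v₂ x * pd₂ v₂ x + pd₂ P x = 0 ∧
    pd₁ v₁ x + pd₂ v₂ x = 0

/-- The set of flow angles `Θ(v; A)` of the vector field `v = (v₁, v₂)` on `A`. -/
def flowAngles (v₁ v₂ : ℝ × ℝ → ℝ) (A : Set (ℝ × ℝ)) : Set (ℝ × ℝ) :=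
  {u | ∃ x ∈ A, ¬(v₁ x = 0 ∧ v₂ x = 0) ∧
        u = (v₁ x / nrm (v₁ x) (v₂ x), v₂ x / nrm (v₁ x) (v₂ x))}

/-- The closed arc `S_{θ₀,β}` of length `2π - 2β` centered at `(cos θ₀, sin θ₀)`. -/
def arcSet (θ₀ β : ℝ) : Set (ℝ × ℝ) :=
  {u | ∃ θ : ℝ, -π + β + θ₀ ≤ θ ∧ θ ≤ π - β + θ₀ ∧ u = (Real.cos θ, Real.sin θ)}

/-- The unit circle `S¹`. -/
def unitCircle : Set (ℝ × ℝ) := {u | u.1 ^ 2 + u.2 ^ 2 = 1}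

/-- The upper closed semicircle `S¹₊`. -/
def upperSemicircle : Set (ℝ × ℝ) := {u | u.1 ^ 2 + u.2 ^ 2 = 1 ∧ 0 ≤ u.2}

/-- The lower closed semicircle `S¹₋`. -/
def lowerSemicircle : Set (ℝ × ℝ) := {u | u.1 ^ 2 + u.2 ^ 2 = 1 ∧ u.2 ≤ 0}

/-- `v` is a parallel shear flow: `v(x) = w(−e₂x₁ + e₁x₂)·e` for some unit vector `e`. -/
def IsShearFlow (v₁ v₂ : ℝ × ℝ → ℝ) : Prop :=
  ∃ e : ℝ × ℝ, e.1 ^ 2 + e.2 ^ 2 = 1 ∧ ∃ w : ℝ → ℝ,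
    ∀ x : ℝ × ℝ, v₁ x = w (-e.2 * x.1 + e.1 * x.2) * e.1 ∧
                 v₂ x = w (-e.2 * x.1 + e.1 * x.2) * e.2

/-- The open strip `Ω∞ = ℝ × (−1, 1)`. -/
def strip : Set (ℝ × ℝ) := {x | -1 < x.2 ∧ x.2 < 1}

/-- The closed strip `ℝ × [−1, 1]`. -/
def stripCl : Set (ℝ × ℝ) := {x | -1 ≤ x.2 ∧ x.2 ≤ 1}

/-- The open upper half-plane `ℝ²₊ = ℝ × (0, ∞)`. -/
def upperHalf : Set (ℝ × ℝ) := {x | 0 < x.2}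

/-- The closed upper half-plane `ℝ × [0, ∞)`. -/
def upperHalfCl : Set (ℝ × ℝ) := {x | 0 ≤ x.2}

/-- `v(x₁,x₂) = (w(x₂), 0)` on the closed strip. -/
def shearOnStrip (v₁ v₂ : ℝ × ℝ → ℝ) : Prop :=
  ∃ w : ℝ → ℝ, ∀ x ∈ stripCl, v₁ x = w x.2 ∧ v₂ x = 0

/-- `v(x₁,x₂) = (w(x₂), 0)` on the closed upper half-plane. -/
def shearOnHalf (v₁ v₂ : ℝ × ℝ → ℝ) : Prop :=
  ∃ w : ℝ → ℝ, ∀ x ∈ upperHalfCl, v₁ x = w x.2 ∧ v₂ x = 0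

/-- The total-curvature integrand `|v₁∇v₂ − v₂∇v₁|² / |v|²` (interpreted as `0` where `v = 0`). -/
def curv (v₁ v₂ : ℝ × ℝ → ℝ) (x : ℝ × ℝ) : ℝ :=
  ((v₁ x * pd₁ v₂ x - v₂ x * pd₁ v₁ x) ^ 2 +
   (v₁ x * pd₂ v₂ x - v₂ x * pd₂ v₁ x) ^ 2) / (v₁ x ^ 2 + v₂ x ^ 2)


/-! The equations force `(v·∇)v = 0`. Hence, along the ray `θ ↦ x + θ • T • v x`, the value
`v (x + θ • T • v x)` and the constant `v x` solve the same linear ODE, so `v` is constant on every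
segment of its own streamline that stays in the domain. In the plane, two non-parallel values of
`v` would be carried along two crossing lines to their intersection point, so all values are
parallel to one unit vector `e`, and then `v` is constant along `e`. In a half-plane or a strip, a
streamline with `v₂ ≠ 0` would carry the value `v₂ ≠ 0` to the boundary, so `v₂ = 0` and `v` is
constant along horizontal lines. -/

theorem map_add_smul_self_eq {E : Type*} [NormedAddCommGroup E] [NormedSpace ℝ E]
    {F : E → E} {U : Set E} (hF : ContDiff ℝ 1 F)
    (hU : ∀ y ∈ U, fderiv ℝ F y (F y) = 0) {x : E} {T : ℝ}
    (hseg : ∀ θ ∈ Ico (0 : ℝ) 1, x + (θ * T) • F x ∈ U) :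
    F (x + T • F x) = F x := by
  set c := F x
  set ℓ : ℝ → E := fun θ => x + (θ * T) • c
  have hℓ : ∀ θ, HasDerivAt ℓ (T • c) θ := fun θ =>
    ((hasDerivAt_mul_const T).smul_const c).const_add x
  have hℓc : Continuous ℓ := by fun_prop
  obtain ⟨C, hC⟩ : ∃ C, ∀ θ ∈ Icc (0 : ℝ) 1, ‖fderiv ℝ F (ℓ θ)‖ ≤ C :=
    isCompact_Icc.exists_bound_of_continuousOn
      ((hF.continuous_fderiv one_ne_zero).comp hℓc).continuousOn
  have hlip : ∀ θ ∈ Ico (0 : ℝ) 1, LipschitzOnWith (Real.toNNReal (|T| * C))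
      (fun u => T • fderiv ℝ F (ℓ θ) (c - u)) univ := by
    intro θ hθ
    refine (LipschitzWith.of_dist_le' fun u u' => ?_).lipschitzOnWith
    rw [dist_eq_norm, dist_eq_norm, ← smul_sub, ← map_sub, norm_smul, Real.norm_eq_abs,
      mul_assoc, sub_sub_sub_cancel_left, norm_sub_rev u]
    gcongr
    exact (ContinuousLinearMap.le_opNorm _ _).trans
      (by gcongr; exact hC θ (Ico_subset_Icc_self hθ))
  have hsol : ∀ θ ∈ Ico (0 : ℝ) 1, HasDerivWithinAt (F ∘ ℓ)
      (T • fderiv ℝ F (ℓ θ) (c - (F ∘ ℓ) θ)) (Ici θ) θ := by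
    intro θ hθ
    have h := (hF.differentiable one_ne_zero (ℓ θ)).hasFDerivAt.comp_hasDerivAt θ (hℓ θ)
    rw [Function.comp_apply, map_sub, hU _ (hseg θ hθ), sub_zero, ← map_smul]
    exact h.hasDerivWithinAt
  have hconst := ODE_solution_unique_of_mem_Icc_right (g := fun _ => c) hlip
    (hF.continuous.comp hℓc).continuousOn hsol (fun _ _ => mem_univ _)
    continuousOn_const (fun θ _ => by simpa using hasDerivWithinAt_const θ (Ici θ) c)
    (fun _ _ => mem_univ _) (by simp [ℓ, c])
  simpa [ℓ] using hconst (right_mem_Icc.2 zero_le_one)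

theorem map_add_smul_eq_of_parallel {E : Type*} [AddCommGroup E] [Module ℝ E]
    {F : E → E} {y e : E} {t : ℝ}
    (hy : ∀ s : ℝ, F (y + s • F y) = F y)
    (hz : ∀ s : ℝ, F (y + t • e + s • F (y + t • e)) = F (y + t • e))
    (hFy : ∃ a : ℝ, F y = a • e) (hFz : ∃ b : ℝ, F (y + t • e) = b • e) :
    F (y + t • e) = F y := by
  obtain ⟨a, ha⟩ := hFy
  obtain ⟨b, hb⟩ := hFz
  by_cases ha0 : a = 0
  · by_cases hb0 : b = 0
    · rw [ha, hb, ha0, hb0]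
    · have h := hz (-t / b)
      rwa [hb, smul_smul, div_mul_cancel₀ _ hb0, add_assoc, ← add_smul, add_neg_cancel,
        zero_smul, add_zero, ← hb, eq_comm] at h
  · have h := hy (t / a)
    rwa [ha, smul_smul, div_mul_cancel₀ _ ha0, ← ha] at h

theorem clm_apply_pair (L : ℝ × ℝ →L[ℝ] ℝ) (a b : ℝ) :
    L (a, b) = a * L (1, 0) + b * L (0, 1) := by
  have h : ((a, b) : ℝ × ℝ) = a • ((1 : ℝ), (0 : ℝ)) + b • ((0 : ℝ), (1 : ℝ)) := by
    simp
  rw [h, map_add, map_smul, map_smul, smul_eq_mul, smul_eq_mul]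

/-- Using the two curl-type equations, `(v·∇)v = (v₁ div v, v₂ div v)`. -/
theorem fderiv_prodMk_apply_self_eq_zero {v₁ v₂ : ℝ × ℝ → ℝ} {y : ℝ × ℝ}
    (h₁ : DifferentiableAt ℝ v₁ y) (h₂ : DifferentiableAt ℝ v₂ y)
    (hcurl₁ : v₁ y * pd₁ v₂ y - v₂ y * pd₁ v₁ y = 0)
    (hcurl₂ : v₁ y * pd₂ v₂ y - v₂ y * pd₂ v₁ y = 0) (hdiv : pd₁ v₁ y + pd₂ v₂ y = 0) :
    fderiv ℝ (fun z => (v₁ z, v₂ z)) y (v₁ y, v₂ y) = 0 := by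
  rw [h₁.fderiv_prodMk h₂, ContinuousLinearMap.prod_apply, clm_apply_pair _ (v₁ y) (v₂ y),
    clm_apply_pair _ (v₁ y) (v₂ y), Prod.mk_eq_zero]
  unfold pd₁ pd₂ at *
  constructor
  · linear_combination v₁ y * hdiv - hcurl₂
  · linear_combination v₂ y * hdiv + hcurl₁

section Plane

variable {F : ℝ × ℝ → ℝ × ℝ}

theorem cross_eq_zero_of_forall_map_add_smul_self_eq (hline : ∀ x (t : ℝ), F (x + t • F x) = F x)
    (x z : ℝ × ℝ) : (F x).1 * (F z).2 - (F x).2 * (F z).1 = 0 := by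
  set Δ := (F x).1 * (F z).2 - (F x).2 * (F z).1
  by_contra hΔ
  -- the lines through `x` and `z` in the directions `F x`, `F z` meet (Cramer's rule)
  set s := ((z.1 - x.1) * (F z).2 - (F z).1 * (z.2 - x.2)) / Δ
  set t := ((F x).2 * (z.1 - x.1) - (F x).1 * (z.2 - x.2)) / Δ
  have hs : s * Δ = (z.1 - x.1) * (F z).2 - (F z).1 * (z.2 - x.2) := div_mul_cancel₀ _ hΔ
  have ht : t * Δ = (F x).2 * (z.1 - x.1) - (F x).1 * (z.2 - x.2) := div_mul_cancel₀ _ hΔ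
  have hmeet : x + s • F x = z + t • F z := by
    ext <;> apply mul_right_cancel₀ hΔ <;>
      simp only [Prod.fst_add, Prod.snd_add, Prod.smul_fst, Prod.smul_snd, smul_eq_mul]
    · linear_combination (F x).1 * hs - (F z).1 * ht
    · linear_combination (F x).2 * hs - (F z).2 * ht
  have hxz : F x = F z := by rw [← hline x s, hmeet, hline]
  exact hΔ (by simp only [Δ, hxz]; ring)

theorem exists_shear_of_forall_map_add_smul_self_eq
    (hline : ∀ x (t : ℝ), F (x + t • F x) = F x) :
    ∃ e : ℝ × ℝ, e.1 ^ 2 + e.2 ^ 2 = 1 ∧ ∃ w : ℝ → ℝ,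
      ∀ x, F x = w (-e.2 * x.1 + e.1 * x.2) • e := by
  by_cases h0 : ∀ x, F x = 0
  · exact ⟨(1, 0), by norm_num, fun _ => 0, fun x => by simp [h0 x]⟩
  push Not at h0
  obtain ⟨x₀, hx₀⟩ := h0
  have hpos : 0 < (F x₀).1 ^ 2 + (F x₀).2 ^ 2 := by
    refine (add_nonneg (sq_nonneg _) (sq_nonneg _)).lt_of_ne fun h => hx₀ ?_
    obtain ⟨h₁, h₂⟩ := (add_eq_zero_iff_of_nonneg (sq_nonneg _) (sq_nonneg _)).1 h.symm
    exact Prod.ext (pow_eq_zero_iff two_ne_zero |>.1 h₁) (pow_eq_zero_iff two_ne_zero |>.1 h₂)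
  set n := √((F x₀).1 ^ 2 + (F x₀).2 ^ 2)
  have hn : n ^ 2 = (F x₀).1 ^ 2 + (F x₀).2 ^ 2 := Real.sq_sqrt hpos.le
  have hn0 : n ≠ 0 := (Real.sqrt_pos.2 hpos).ne'
  set e : ℝ × ℝ := n⁻¹ • F x₀
  have he : e.1 ^ 2 + e.2 ^ 2 = 1 := by
    simp only [e, Prod.smul_fst, Prod.smul_snd, smul_eq_mul]
    field_simp
    linear_combination -hn
  have hpar : ∀ x, F x = ((F x).1 * e.1 + (F x).2 * e.2) • e := by
    intro x
    have hc := cross_eq_zero_of_forall_map_add_smul_self_eq hline x x₀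
    ext <;> simp only [e, Prod.smul_fst, Prod.smul_snd, smul_eq_mul] <;> field_simp
    · linear_combination (F x).1 * hn + (F x₀).2 * hc
    · linear_combination (F x).2 * hn - (F x₀).1 * hc
  have hinv : ∀ x (t : ℝ), F (x + t • e) = F x := fun x t =>
    map_add_smul_eq_of_parallel (hline x) (hline _) ⟨_, hpar x⟩ ⟨_, hpar _⟩
  refine ⟨e, he, fun s => (F (s • (-e.2, e.1))).1 * e.1 + (F (s • (-e.2, e.1))).2 * e.2,
    fun x => ?_⟩
  have hx : x =
      (-e.2 * x.1 + e.1 * x.2) • ((-e.2, e.1) : ℝ × ℝ) + (e.1 * x.1 + e.2 * x.2) • e := by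
    ext <;> simp only [Prod.fst_add, Prod.snd_add, Prod.smul_fst, Prod.smul_snd, smul_eq_mul]
    · linear_combination (-x.1) * he
    · linear_combination (-x.2) * he
  conv_lhs => rw [hx, hinv]
  exact hpar _

end Plane

section HalfPlane

variable {F : ℝ × ℝ → ℝ × ℝ} {I : Set ℝ}

theorem snd_eq_zero_of_snd_eq_zero_on_frontier (hIo : IsOpen I) (hIc : Convex ℝ I)
    (hI : I ≠ univ) (hF : ContDiff ℝ 1 F) (hU : ∀ y ∈ univ ×ˢ I, fderiv ℝ F y (F y) = 0)
    (hbc : ∀ x ∈ frontier (univ ×ˢ I), (F x).2 = 0) {x : ℝ × ℝ} (hx : x ∈ univ ×ˢ I) :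
    (F x).2 = 0 := by
  by_contra hx0
  obtain ⟨β, hβ⟩ := nonempty_frontier_iff.2 ⟨⟨x.2, hx.2⟩, hI⟩
  -- the streamline through `x` reaches the boundary line `{x.2 = β}` at time `T`
  set T := (β - x.2) / (F x).2
  have hsnd : ∀ θ : ℝ, (x + (θ * T) • F x).2 = (1 - θ) * x.2 + θ * β := fun θ => by
    simp only [Prod.snd_add, Prod.smul_snd, smul_eq_mul, T]
    field_simp
    ring
  have hseg : ∀ θ ∈ Ico (0 : ℝ) 1, x + (θ * T) • F x ∈ univ ×ˢ I := by
    intro θ hθ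
    refine ⟨mem_univ _, ?_⟩
    rw [hsnd, ← hIo.interior_eq]
    exact hIc.combo_interior_closure_mem_interior (by rw [hIo.interior_eq]; exact hx.2)
      (frontier_subset_closure hβ) (by linarith [hθ.2]) hθ.1 (by ring)
  have hbd : x + T • F x ∈ frontier (univ ×ˢ I) := by
    have hT : (x + T • F x).2 = β := by simpa using hsnd 1
    rw [frontier_univ_prod_eq]
    exact ⟨mem_univ _, hT ▸ hβ⟩
  exact hx0 (map_add_smul_self_eq hF hU hseg ▸ hbc _ hbd)

theorem exists_eq_horizontal_of_snd_eq_zero (hF : ContDiff ℝ 1 F)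
    (hU : ∀ y ∈ univ ×ˢ I, fderiv ℝ F y (F y) = 0) (h2 : ∀ x ∈ univ ×ˢ I, (F x).2 = 0) :
    ∃ w : ℝ → ℝ, ∀ x ∈ closure (univ ×ˢ I), F x = (w x.2, 0) := by
  have hline : ∀ y ∈ univ ×ˢ I, ∀ s : ℝ, F (y + s • F y) = F y := by
    intro y hy s
    refine map_add_smul_self_eq hF hU fun θ _ => ⟨mem_univ _, ?_⟩
    simpa [h2 y hy] using hy.2
  have hhor : ∀ y ∈ univ ×ˢ I, F y = (F y).1 • ((1 : ℝ), (0 : ℝ)) := fun y hy => by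
    ext <;> simp [h2 y hy]
  have hΩ : EqOn F (fun x => ((F (0, x.2)).1, 0)) (univ ×ˢ I) := by
    intro x hx
    have hy : ((0 : ℝ), x.2) ∈ univ ×ˢ I := ⟨mem_univ _, hx.2⟩
    have hx' : x = ((0 : ℝ), x.2) + x.1 • ((1 : ℝ), (0 : ℝ)) := by ext <;> simp
    have h := map_add_smul_eq_of_parallel (hline _ hy) (hx' ▸ hline x hx) ⟨_, hhor _ hy⟩
      (hx' ▸ ⟨_, hhor x hx⟩)
    rw [← hx'] at h
    rw [h, hhor _ hy]
    simp
  exact ⟨fun s => (F (0, s)).1, fun x hx =>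
    hΩ.closure hF.continuous (by fun_prop) hx⟩

end HalfPlane

/-- an incompressible flow with vanishing total-curvature field
(`v₁∇v₂ − v₂∇v₁ = 0`) in the plane, a half-plane, or a strip, with the slip
boundary condition on finite horizontal boundary lines, is a shear flow. -/
theorem statement12
    (Ω : Set (ℝ × ℝ))
    (hΩ : Ω = univ ∨ (∃ a : ℝ, Ω = {x : ℝ × ℝ | a < x.2}) ∨
          (∃ b : ℝ, Ω = {x : ℝ × ℝ | x.2 < b}) ∨
          (∃ a b : ℝ, a < b ∧ Ω = {x : ℝ × ℝ | a < x.2 ∧ x.2 < b}))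
    (v₁ v₂ : ℝ × ℝ → ℝ) (hv₁ : ContDiff ℝ 1 v₁) (hv₂ : ContDiff ℝ 1 v₂)
    (heq : ∀ x ∈ Ω,
      (v₁ x * pd₁ v₂ x - v₂ x * pd₁ v₁ x = 0 ∧
       v₁ x * pd₂ v₂ x - v₂ x * pd₂ v₁ x = 0) ∧
      pd₁ v₁ x + pd₂ v₂ x = 0)
    (hbc : ∀ x ∈ frontier Ω, v₂ x = 0) :
    (∃ e : ℝ × ℝ, e.1 ^ 2 + e.2 ^ 2 = 1 ∧ ∃ w : ℝ → ℝ,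
        ∀ x ∈ closure Ω, v₁ x = w (-e.2 * x.1 + e.1 * x.2) * e.1 ∧
                         v₂ x = w (-e.2 * x.1 + e.1 * x.2) * e.2) ∧
    (Ω ≠ univ → ∃ w : ℝ → ℝ, ∀ x ∈ closure Ω, v₁ x = w x.2 ∧ v₂ x = 0) := by
  set F : ℝ × ℝ → ℝ × ℝ := fun x => (v₁ x, v₂ x)
  have hF : ContDiff ℝ 1 F := hv₁.prodMk hv₂
  have hU : ∀ y ∈ Ω, fderiv ℝ F y (F y) = 0 := fun y hy =>
    fderiv_prodMk_apply_self_eq_zero (hv₁.differentiable one_ne_zero y)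
      (hv₂.differentiable one_ne_zero y) (heq y hy).1.1 (heq y hy).1.2 (heq y hy).2
  rcases hΩ with rfl | hΩ
  · obtain ⟨e, he, w, hw⟩ := exists_shear_of_forall_map_add_smul_self_eq fun x t =>
      map_add_smul_self_eq hF hU fun _ _ => mem_univ _
    exact ⟨⟨e, he, w, fun x _ => Prod.ext_iff.1 (hw x)⟩, fun h => absurd rfl h⟩
  obtain ⟨I, hIo, hIc, hI, rfl⟩ :
      ∃ I : Set ℝ, IsOpen I ∧ Convex ℝ I ∧ I ≠ univ ∧ Ω = univ ×ˢ I := by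
    rcases hΩ with ⟨a, rfl⟩ | ⟨b, rfl⟩ | ⟨a, b, -, rfl⟩
    · exact ⟨Ioi a, isOpen_Ioi, convex_Ioi a, (ne_univ_iff_exists_notMem _).2 ⟨a, lt_irrefl a⟩,
        by ext; simp⟩
    · exact ⟨Iio b, isOpen_Iio, convex_Iio b, (ne_univ_iff_exists_notMem _).2 ⟨b, lt_irrefl b⟩,
        by ext; simp⟩
    · exact ⟨Ioo a b, isOpen_Ioo, convex_Ioo a b,
        (ne_univ_iff_exists_notMem _).2 ⟨a, fun h => lt_irrefl a h.1⟩, by ext; simp⟩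
  obtain ⟨w, hw⟩ := exists_eq_horizontal_of_snd_eq_zero hF hU fun x hx =>
    snd_eq_zero_of_snd_eq_zero_on_frontier hIo hIc hI hF hU hbc hx
  have hw' : ∀ x ∈ closure (univ ×ˢ I), v₁ x = w x.2 ∧ v₂ x = 0 := fun x hx =>
    Prod.ext_iff.1 (hw x hx)
  exact ⟨⟨(1, 0), by norm_num, w, fun x hx => by simpa using hw' x hx⟩, fun _ => ⟨w, hw'⟩⟩
end
end

section
/- Let Ω∞ = ℝ×(−1,1) and let v = (v₁,v₂) be C¹ and P be C¹ on the closed strip ℝ×[−1,1] such that (v,P) solves the steady incompressible Euler system in Ω∞, v satisfies the slip boundary condition v₂(x₁,1) = v₂(x₁,−1) = 0 for all x₁ ∈ ℝ, there is a constant C > 0 such that sup_{[−R,R]×[−1,1]} |v| ≤ C·√R for every R > 100, and the total curvature is finite: ∫_{Ω∞} |v₁∇v₂ − v₂∇v₁|² / |v|² dx < ∞. For R > 100 let φ_R : ℝ → ℝ be the cutoff φ_R(t) = min(1, max(0, 2 − |t|/R)). Then the boundary flux tends to zero: lim_{R→∞} [ ∫_ℝ φ_R(x₁)·(v₁ ∂ₓ₂v₂)(x₁,1)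 dx₁ − ∫_ℝ φ_R(x₁)·(v₁ ∂ₓ₂v₂)(x₁,−1) dx₁ ] = 0. -/
open Real Set MeasureTheory Filter

noncomputable section

/-! On each wall the slip condition reduces the Euler equations to `v₁ ∂₂v₂ = ∂₁P`, so an
integration by parts against the cutoff writes the flux as `R⁻¹` times the integral of
`P(·,1) − P(·,−1) = ∫ ∂₂P dx₂` over the ramps `R ≤ |x₁| ≤ 2R`, that is, as `R⁻¹` times integrals
of `∂₂P` over two boxes of area `2R`. Inside the strip `∂₂P = v₂∂₁v₁ − v₁∂₁v₂`, which AM-GM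
bounds by `δ|v|²/2 + curv/(2δ)`. With `|v|² ≤ 2C²R` on the boxes and `δ = η/R` the flux is at
most `4C²η + η⁻¹ ∫_{|x₁| ≥ R} curv`; the tail of the finite total curvature tends to `0`, and
`η > 0` is arbitrary. -/

open Topology

lemma hasDerivAt_pd₁ {f : ℝ × ℝ → ℝ} {t c : ℝ} (hf : DifferentiableAt ℝ f (t, c)) :
    HasDerivAt (fun t => f (t, c)) (pd₁ f (t, c)) t :=
  hf.hasFDerivAt.comp_hasDerivAt t ((hasDerivAt_id t).prodMk (hasDerivAt_const t c))

lemma hasDerivAt_pd₂ {f : ℝ × ℝ → ℝ} {t s : ℝ} (hf : DifferentiableAt ℝ f (t, s)) :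
    HasDerivAt (fun s => f (t, s)) (pd₂ f (t, s)) s :=
  hf.hasFDerivAt.comp_hasDerivAt s ((hasDerivAt_const s t).prodMk (hasDerivAt_id s))

lemma ContDiff.continuous_pd₁ {f : ℝ × ℝ → ℝ} (hf : ContDiff ℝ 1 f) : Continuous (pd₁ f) :=
  (hf.continuous_fderiv one_ne_zero).clm_apply continuous_const

lemma ContDiff.continuous_pd₂ {f : ℝ × ℝ → ℝ} (hf : ContDiff ℝ 1 f) : Continuous (pd₂ f) :=
  (hf.continuous_fderiv one_ne_zero).clm_apply continuous_const

lemma strip_eq_prod : strip = univ ×ˢ Ioo (-1 : ℝ) 1 := by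
  ext x
  simp [strip]

lemma closure_strip : closure strip = stripCl := by
  rw [strip_eq_prod, closure_prod_eq, closure_univ, closure_Ioo (by norm_num)]
  ext x
  simp [stripCl]

section Euler

variable {v₁ v₂ P : ℝ × ℝ → ℝ} {Ω : Set (ℝ × ℝ)}

lemma EulerOn.closure (h : EulerOn v₁ v₂ P Ω) (hv₁ : ContDiff ℝ 1 v₁) (hv₂ : ContDiff ℝ 1 v₂)
    (hP : ContDiff ℝ 1 P) : EulerOn v₁ v₂ P (closure Ω) := by
  have := hv₁.continuous; have := hv₂.continuous
  have := hv₁.continuous_pd₁; have := hv₁.continuous_pd₂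
  have := hv₂.continuous_pd₁; have := hv₂.continuous_pd₂
  have := hP.continuous_pd₁; have := hP.continuous_pd₂
  refine closure_minimal h ((isClosed_eq ?_ ?_).inter ((isClosed_eq ?_ ?_).inter
    (isClosed_eq ?_ ?_))) <;> fun_prop

lemma EulerOn.pd₂_pressure_eq (h : EulerOn v₁ v₂ P Ω) {x : ℝ × ℝ} (hx : x ∈ Ω) :
    pd₂ P x = v₂ x * pd₁ v₁ x - v₁ x * pd₁ v₂ x := by
  obtain ⟨-, hmom₂, hdiv⟩ := h x hx
  linear_combination hmom₂ - v₂ x * hdiv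

lemma EulerOn.mul_pd₂_eq_pd₁_pressure (h : EulerOn v₁ v₂ P Ω) {x : ℝ × ℝ} (hx : x ∈ Ω)
    (hv₂x : v₂ x = 0) : v₁ x * pd₂ v₂ x = pd₁ P x := by
  obtain ⟨hmom₁, -, hdiv⟩ := h x hx
  rw [hv₂x] at hmom₁
  linear_combination v₁ x * hdiv - hmom₁

end Euler

def cutoff (R t : ℝ) : ℝ := min 1 (max 0 (2 - |t| / R))

lemma continuous_cutoff (R : ℝ) : Continuous (cutoff R) := by
  unfold cutoff; fun_prop

section cutoff

variable {R t : ℝ}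

lemma cutoff_of_abs_le (hR : 0 < R) (ht : |t| ≤ R) : cutoff R t = 1 := by
  have : |t| / R ≤ 1 := (div_le_one hR).2 ht
  rw [cutoff, max_eq_right (by linarith), min_eq_left (by linarith)]

lemma cutoff_of_le_abs (hR : 0 < R) (ht : R ≤ |t|) (ht' : |t| ≤ 2 * R) :
    cutoff R t = 2 - |t| / R := by
  have h1 : 1 ≤ |t| / R := (le_div_iff₀ hR).2 (by linarith)
  have h2 : |t| / R ≤ 2 := (div_le_iff₀ hR).2 ht'
  rw [cutoff, max_eq_right (by linarith), min_eq_right (by linarith)]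

lemma cutoff_of_two_mul_le_abs (hR : 0 < R) (ht : 2 * R ≤ |t|) : cutoff R t = 0 := by
  have : 2 ≤ |t| / R := (le_div_iff₀ hR).2 (by linarith)
  rw [cutoff, max_eq_left (by linarith), min_eq_right zero_le_one]

end cutoff

lemma integral_affine_mul_deriv {q q' : ℝ → ℝ} (hq : ∀ t, HasDerivAt q (q' t) t)
    (hq' : Continuous q') (α β a b : ℝ) :
    ∫ t in a..b, (α + β * t) * q' t =
      (α + β * b) * q b - (α + β * a) * q a - β * ∫ t in a..b, q t := by
  have hu : ∀ t, HasDerivAt (fun t => α + β * t) β t := fun t => by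
    simpa using ((hasDerivAt_id t).const_mul β).const_add α
  rw [intervalIntegral.integral_mul_deriv_eq_deriv_mul (fun t _ => hu t) (fun t _ => hq t)
    intervalIntegrable_const (hq'.intervalIntegrable a b), intervalIntegral.integral_const_mul]

-- The cutoff is affine on each of `[-2R, -R]`, `[-R, R]`, `[R, 2R]` and vanishes outside.
lemma integral_cutoff_mul_deriv {q q' : ℝ → ℝ} (hq : ∀ t, HasDerivAt q (q' t) t)
    (hq' : Continuous q') {R : ℝ} (hR : 0 < R) :
    ∫ t, cutoff R t * q' t =
      (1 / R) * ((∫ t in R..2 * R, q t) - ∫ t in -(2 * R)..-R, q t) := by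
  have hint : ∀ a b, IntervalIntegrable (fun t => cutoff R t * q' t) volume a b := fun a b =>
    ((continuous_cutoff R).mul hq').intervalIntegrable a b
  have hsupp : ∫ t, cutoff R t * q' t = ∫ t in -(2 * R)..2 * R, cutoff R t * q' t := by
    rw [intervalIntegral.integral_of_le (by linarith),
      ← setIntegral_eq_integral_of_forall_compl_eq_zero fun t ht => ?_]
    rw [cutoff_of_two_mul_le_abs hR, zero_mul]
    simp only [mem_Ioc, not_and_or, not_lt, not_le] at ht
    rcases ht with ht | ht <;> [rw [abs_of_neg (by linarith)]; rw [abs_of_pos (by linarith)]] <;>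
      linarith
  have hleft : ∫ t in -(2 * R)..-R, cutoff R t * q' t =
      ∫ t in -(2 * R)..-R, (2 + 1 / R * t) * q' t := by
    refine intervalIntegral.integral_congr fun t ht => ?_
    rw [uIcc_of_le (by linarith)] at ht
    have habs : |t| = -t := abs_of_neg (by linarith [ht.2])
    simp only [cutoff_of_le_abs hR (by linarith [ht.2]) (by linarith [ht.1]), habs]
    ring
  have hmid : ∫ t in -R..R, cutoff R t * q' t = ∫ t in -R..R, (1 + 0 * t) * q' t := by
    refine intervalIntegral.integral_congr fun t ht => ?_
    rw [uIcc_of_le (by linarith)] at ht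
    simp only [cutoff_of_abs_le hR (abs_le.2 ht)]
    ring
  have hright : ∫ t in R..2 * R, cutoff R t * q' t =
      ∫ t in R..2 * R, (2 + -(1 / R) * t) * q' t := by
    refine intervalIntegral.integral_congr fun t ht => ?_
    rw [uIcc_of_le (by linarith)] at ht
    have habs : |t| = t := abs_of_pos (by linarith [ht.1])
    simp only [cutoff_of_le_abs hR (by linarith [ht.1]) (by linarith [ht.2]), habs]
    ring
  rw [hsupp, ← intervalIntegral.integral_add_adjacent_intervals (hint _ (-R)) (hint _ _),
    ← intervalIntegral.integral_add_adjacent_intervals (hint (-R) R) (hint _ _),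
    hleft, hmid, hright, integral_affine_mul_deriv hq hq', integral_affine_mul_deriv hq hq',
    integral_affine_mul_deriv hq hq']
  field_simp
  ring

section curvature

variable {v₁ v₂ : ℝ × ℝ → ℝ}

lemma curv_nonneg (x : ℝ × ℝ) : 0 ≤ curv v₁ v₂ x := by
  unfold curv; positivity

lemma abs_cross_pd₁_le (x : ℝ × ℝ) {δ : ℝ} (hδ : 0 < δ) :
    |v₂ x * pd₁ v₁ x - v₁ x * pd₁ v₂ x| ≤
      δ / 2 * (v₁ x ^ 2 + v₂ x ^ 2) + curv v₁ v₂ x / (2 * δ) := by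
  set G := v₂ x * pd₁ v₁ x - v₁ x * pd₁ v₂ x
  set N := v₁ x ^ 2 + v₂ x ^ 2
  have hκ := curv_nonneg (v₁ := v₁) (v₂ := v₂) x
  rcases (show 0 ≤ N by positivity).eq_or_lt with hN | hN
  · have h₁ : v₁ x = 0 := by nlinarith [sq_nonneg (v₁ x), sq_nonneg (v₂ x)]
    have h₂ : v₂ x = 0 := by nlinarith [sq_nonneg (v₁ x), sq_nonneg (v₂ x)]
    have hG : G = 0 := by simp [G, h₁, h₂]
    rw [hG, abs_zero, ← hN]
    positivity
  · -- AM-GM, using `G² ≤ curv · |v|²`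
    have hG : G ^ 2 ≤ curv v₁ v₂ x * N := by
      rw [curv, div_mul_cancel₀ _ hN.ne']
      nlinarith [sq_nonneg (v₁ x * pd₂ v₂ x - v₂ x * pd₂ v₁ x)]
    rw [← sq_abs] at hG
    have hamgm : 2 * δ * |G| ≤ δ ^ 2 * N + curv v₁ v₂ x := by
      refine le_of_mul_le_mul_right ?_ hN
      nlinarith [sq_nonneg (δ * N - |G|)]
    rw [show δ / 2 * N + curv v₁ v₂ x / (2 * δ) = (δ ^ 2 * N + curv v₁ v₂ x) / (2 * δ) by
      field_simp, le_div_iff₀ (by positivity)]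
    linarith

variable (v₁ v₂)

lemma measurable_curv (hv₁ : ContDiff ℝ 1 v₁) (hv₂ : ContDiff ℝ 1 v₂) :
    Measurable (curv v₁ v₂) := by
  have := hv₁.continuous; have := hv₂.continuous
  have := hv₁.continuous_pd₁; have := hv₁.continuous_pd₂
  have := hv₂.continuous_pd₁; have := hv₂.continuous_pd₂
  exact Measurable.div (by fun_prop) (by fun_prop)

end curvature

lemma tendsto_setIntegral_le_atTop {α : Type*} [MeasurableSpace α] {μ : Measure α}
    {f : α → ℝ} (hf : Integrable f μ) {g : α → ℝ} (hg : Measurable g) :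
    Tendsto (fun R => ∫ x in {x | R ≤ g x}, f x ∂μ) atTop (𝓝 0) := by
  have hmeas : ∀ R, MeasurableSet {x | R ≤ g x} := fun R => measurableSet_le measurable_const hg
  simp_rw [← integral_indicator (hmeas _)]
  rw [← integral_zero α ℝ]
  refine tendsto_integral_filter_of_dominated_convergence (fun x => ‖f x‖)
    (Eventually.of_forall fun R => hf.aestronglyMeasurable.indicator (hmeas R))
    (Eventually.of_forall fun R => ae_of_all _ fun x => norm_indicator_le_norm_self _ _)
    hf.norm (ae_of_all _ fun x => tendsto_const_nhds.congr' ?_)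
  filter_upwards [eventually_gt_atTop (g x)] with R hR
  exact (indicator_of_notMem (s := {x | R ≤ g x}) (not_le.2 hR) f).symm

lemma setIntegral_pd₂_prod_Ioo {P : ℝ × ℝ → ℝ} (hP : ContDiff ℝ 1 P) {a b : ℝ} (hab : a ≤ b) :
    ∫ x in Ioc a b ×ˢ Ioo (-1 : ℝ) 1, pd₂ P x =
      (∫ t in a..b, P (t, 1)) - ∫ t in a..b, P (t, -1) := by
  have hPc : Continuous P := hP.continuous
  have hslice : ∀ t, ∫ s in Ioo (-1 : ℝ) 1, pd₂ P (t, s) = P (t, 1) - P (t, -1) := fun t => by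
    rw [← integral_Ioc_eq_integral_Ioo, ← intervalIntegral.integral_of_le (by norm_num)]
    exact intervalIntegral.integral_eq_sub_of_hasDerivAt
      (fun s _ => hasDerivAt_pd₂ (hP.differentiable one_ne_zero _))
      ((hP.continuous_pd₂.comp (Continuous.prodMk_right t)).intervalIntegrable _ _)
  have hint : IntegrableOn (pd₂ P) (Ioc a b ×ˢ Ioo (-1 : ℝ) 1) :=
    (hP.continuous_pd₂.continuousOn.integrableOn_compact
      (isCompact_Icc.prod isCompact_Icc)).mono_set
      (prod_mono Ioc_subset_Icc_self Ioo_subset_Icc_self)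
  rw [Measure.volume_eq_prod, setIntegral_prod _ hint]
  simp only [hslice]
  rw [← intervalIntegral.integral_of_le hab]
  exact intervalIntegral.integral_sub ((hPc.comp (Continuous.prodMk_left 1)).intervalIntegrable _ _)
    ((hPc.comp (Continuous.prodMk_left (-1))).intervalIntegrable _ _)

lemma EulerOn.integral_cutoff_mul_wall_flux {v₁ v₂ P : ℝ × ℝ → ℝ} {Ω : Set (ℝ × ℝ)}
    (h : EulerOn v₁ v₂ P Ω) (hP : ContDiff ℝ 1 P) {c : ℝ} (hΩ : ∀ t, (t, c) ∈ Ω)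
    (hslip : ∀ t, v₂ (t, c) = 0) {R : ℝ} (hR : 0 < R) :
    ∫ t, cutoff R t * (v₁ (t, c) * pd₂ v₂ (t, c)) =
      (1 / R) * ((∫ t in R..2 * R, P (t, c)) - ∫ t in -(2 * R)..-R, P (t, c)) := by
  simp_rw [h.mul_pd₂_eq_pd₁_pressure (hΩ _) (hslip _)]
  exact integral_cutoff_mul_deriv (fun t => hasDerivAt_pd₁ (hP.differentiable one_ne_zero _))
    (hP.continuous_pd₁.comp (Continuous.prodMk_left c)) hR

def curvTail (v₁ v₂ : ℝ × ℝ → ℝ) (R : ℝ) : ℝ :=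
  ∫ x in {x : ℝ × ℝ | R ≤ |x.1|}, curv v₁ v₂ x ∂volume.restrict strip

lemma abs_setIntegral_pd₂_prod_Ioo_le {v₁ v₂ P : ℝ × ℝ → ℝ}
    (hEuler : EulerOn v₁ v₂ P strip) (hcurv : IntegrableOn (curv v₁ v₂) strip)
    {a b R B δ : ℝ} (hab : a ≤ b) (hδ : 0 < δ) (hR : ∀ t ∈ Ioc a b, R ≤ |t|)
    (hB : ∀ x ∈ Ioc a b ×ˢ Ioo (-1 : ℝ) 1, v₁ x ^ 2 + v₂ x ^ 2 ≤ B) :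
    |∫ x in Ioc a b ×ˢ Ioo (-1 : ℝ) 1, pd₂ P x| ≤
      δ * B * (b - a) + curvTail v₁ v₂ R / (2 * δ) := by
  set K := Ioc a b ×ˢ Ioo (-1 : ℝ) 1
  have hKm : MeasurableSet K := measurableSet_Ioc.prod measurableSet_Ioo
  have hKs : K ⊆ strip := fun x hx => hx.2
  have hKvol : volume K = ENNReal.ofReal ((b - a) * 2) := by
    rw [Measure.volume_eq_prod, Measure.prod_prod, Real.volume_Ioc, Real.volume_Ioo,
      ← ENNReal.ofReal_mul (by linarith)]
    norm_num
  have hKfin : volume K ≠ ⊤ := by simp [hKvol]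
  have hKvol' : volume.real K = (b - a) * 2 := by
    rw [measureReal_def, hKvol, ENNReal.toReal_ofReal (by linarith)]
  have hcurvK : IntegrableOn (curv v₁ v₂) K := hcurv.mono_set hKs
  have hconst : IntegrableOn (fun _ => δ / 2 * B) K := integrableOn_const hKfin
  have hpointwise : ∀ x ∈ K, ‖pd₂ P x‖ ≤ δ / 2 * B + curv v₁ v₂ x / (2 * δ) := fun x hx => by
    rw [Real.norm_eq_abs, hEuler.pd₂_pressure_eq (hKs hx)]
    have := mul_le_mul_of_nonneg_left (hB x hx) (by positivity : 0 ≤ δ / 2)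
    linarith [abs_cross_pd₁_le (v₁ := v₁) (v₂ := v₂) x hδ]
  have hcurvTail : ∫ x in K, curv v₁ v₂ x ≤ curvTail v₁ v₂ R := by
    have hSm : MeasurableSet {x : ℝ × ℝ | R ≤ |x.1|} :=
      measurableSet_le measurable_const measurable_fst.abs
    rw [curvTail, Measure.restrict_restrict hSm]
    refine setIntegral_mono_set (hcurv.mono_set inter_subset_right)
      (ae_of_all _ curv_nonneg) (LE.le.eventuallyLE fun x hx => ⟨hR _ hx.1, hKs hx⟩)
  calc |∫ x in K, pd₂ P x|
      ≤ ∫ x in K, (δ / 2 * B + curv v₁ v₂ x / (2 * δ)) :=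
        norm_integral_le_of_norm_le (hconst.add
          (hcurvK.div_const _)) (ae_restrict_of_forall_mem hKm hpointwise)
    _ = δ / 2 * B * ((b - a) * 2) + (∫ x in K, curv v₁ v₂ x) / (2 * δ) := by
        rw [integral_add hconst (hcurvK.div_const _),
          setIntegral_const, integral_div, hKvol', smul_eq_mul]
        ring
    _ ≤ δ * B * (b - a) + curvTail v₁ v₂ R / (2 * δ) := by
        have := div_le_div_of_nonneg_right hcurvTail (by positivity : 0 ≤ 2 * δ)
        linarith

lemma EulerOn.integral_cutoff_mul_flux_sub {v₁ v₂ P : ℝ × ℝ → ℝ} (h : EulerOn v₁ v₂ P stripCl)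
    (hP : ContDiff ℝ 1 P) (hslip : ∀ t : ℝ, v₂ (t, 1) = 0 ∧ v₂ (t, -1) = 0) {R : ℝ}
    (hR : 0 < R) :
    (∫ t, cutoff R t * (v₁ (t, 1) * pd₂ v₂ (t, 1))) -
        ∫ t, cutoff R t * (v₁ (t, -1) * pd₂ v₂ (t, -1)) =
      ((∫ x in Ioc R (2 * R) ×ˢ Ioo (-1 : ℝ) 1, pd₂ P x) -
        ∫ x in Ioc (-(2 * R)) (-R) ×ˢ Ioo (-1 : ℝ) 1, pd₂ P x) / R := by
  rw [h.integral_cutoff_mul_wall_flux hP (fun _ => ⟨by norm_num, le_rfl⟩) (fun t => (hslip t).1) hR,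
    h.integral_cutoff_mul_wall_flux hP (fun _ => ⟨le_rfl, by norm_num⟩) (fun t => (hslip t).2) hR,
    setIntegral_pd₂_prod_Ioo hP (by linarith), setIntegral_pd₂_prod_Ioo hP (by linarith)]
  ring

lemma abs_setIntegral_pd₂_ramps_le {v₁ v₂ P : ℝ × ℝ → ℝ} (hEuler : EulerOn v₁ v₂ P strip)
    (hcurv : IntegrableOn (curv v₁ v₂) strip) {R A η : ℝ} (hR : 0 < R) (hη : 0 < η)
    (hB : ∀ x ∈ strip, |x.1| ≤ 2 * R → v₁ x ^ 2 + v₂ x ^ 2 ≤ A * R) :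
    |((∫ x in Ioc R (2 * R) ×ˢ Ioo (-1 : ℝ) 1, pd₂ P x) -
        ∫ x in Ioc (-(2 * R)) (-R) ×ˢ Ioo (-1 : ℝ) 1, pd₂ P x) / R| ≤
      2 * A * η + curvTail v₁ v₂ R / η := by
  have hbox : ∀ a, (∀ t ∈ Ioc a (a + R), R ≤ |t| ∧ |t| ≤ 2 * R) →
      |∫ x in Ioc a (a + R) ×ˢ Ioo (-1 : ℝ) 1, pd₂ P x| ≤
        A * η * R + R * curvTail v₁ v₂ R / (2 * η) := by
    intro a ha
    have := abs_setIntegral_pd₂_prod_Ioo_le hEuler hcurv (by linarith) (div_pos hη hR)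
      (fun t ht => (ha t ht).1) fun x hx => hB x hx.2 (ha _ hx.1).2
    convert this using 1
    field_simp
    ring
  have hright := hbox R fun t ht => by
    constructor <;> rw [abs_of_pos (by linarith [ht.1])] <;> linarith [ht.1, ht.2]
  have hleft := hbox (-(2 * R)) fun t ht => by
    constructor <;> rw [abs_of_neg (by linarith [ht.2])] <;> linarith [ht.1, ht.2]
  rw [show R + R = 2 * R by ring] at hright
  rw [show -(2 * R) + R = -R by ring] at hleft
  rw [abs_div, abs_of_pos hR, div_le_iff₀ hR]
  calc _ ≤ _ := abs_sub _ _
    _ ≤ 2 * (A * η * R + R * curvTail v₁ v₂ R / (2 * η)) := by linarith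
    _ = (2 * A * η + curvTail v₁ v₂ R / η) * R := by field_simp

lemma tendsto_zero_of_abs_le_mul_add_div {f b : ℝ → ℝ} {a : ℝ} (hb : Tendsto b atTop (𝓝 0))
    (h : ∀ η > 0, ∀ᶠ R in atTop, |f R| ≤ a * η + b R / η) : Tendsto f atTop (𝓝 0) := by
  rw [Metric.tendsto_nhds]
  intro ε hε
  set η := ε / (2 * (|a| + 1))
  have hη : 0 < η := by positivity
  have haη : a * η < ε / 2 := by
    have : (|a| + 1) * η = ε / 2 := by simp only [η]; field_simp
    nlinarith [le_abs_self a]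
  filter_upwards [h η hη, Metric.tendsto_nhds.1 hb (ε * η / 2) (by positivity)] with R hR hbR
  rw [Real.dist_eq, sub_zero] at hbR ⊢
  have : b R / η < ε / 2 := by
    rw [div_lt_iff₀ hη]
    linarith [le_abs_self (b R)]
  linarith

theorem statement18_general
    (v₁ v₂ P : ℝ × ℝ → ℝ)
    (hv₁ : ContDiff ℝ 1 v₁) (hv₂ : ContDiff ℝ 1 v₂) (hP : ContDiff ℝ 1 P)
    (hEuler : EulerOn v₁ v₂ P strip)
    (hslip : ∀ t : ℝ, v₂ (t, 1) = 0 ∧ v₂ (t, -1) = 0)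
    (C : ℝ)
    (hgrow : ∀ R : ℝ, R > 100 → ∀ x ∈ stripCl, |x.1| ≤ R →
      nrm (v₁ x) (v₂ x) ≤ C * Real.sqrt R)
    (hfin : ∫⁻ x in strip, ENNReal.ofReal (curv v₁ v₂ x) ∂volume < ⊤) :
    Tendsto
      (fun R : ℝ =>
        (∫ t : ℝ, min (1 : ℝ) (max 0 (2 - |t| / R)) * (v₁ (t, 1) * pd₂ v₂ (t, 1))) -
        ∫ t : ℝ, min (1 : ℝ) (max 0 (2 - |t| / R)) * (v₁ (t, -1) * pd₂ v₂ (t, -1)))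
      atTop (nhds 0) := by
  have hcurv : IntegrableOn (curv v₁ v₂) strip :=
    ⟨(measurable_curv v₁ v₂ hv₁ hv₂).aestronglyMeasurable,
      (hasFiniteIntegral_iff_ofReal (ae_of_all _ curv_nonneg)).2 hfin⟩
  have hEulerCl : EulerOn v₁ v₂ P stripCl := closure_strip ▸ hEuler.closure hv₁ hv₂ hP
  refine tendsto_zero_of_abs_le_mul_add_div (a := 2 * (2 * C ^ 2)) (b := curvTail v₁ v₂)
    (tendsto_setIntegral_le_atTop hcurv measurable_fst.abs) fun η hη => ?_
  filter_upwards [eventually_gt_atTop 100] with R hR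
  have hB : ∀ x ∈ strip, |x.1| ≤ 2 * R → v₁ x ^ 2 + v₂ x ^ 2 ≤ 2 * C ^ 2 * R := by
    intro x hx hx₁
    have := (Real.sqrt_le_iff.1 (hgrow (2 * R) (by linarith) x (Ioo_subset_Icc_self hx) hx₁)).2
    rwa [mul_pow, Real.sq_sqrt (by linarith), ← mul_assoc, mul_comm (C ^ 2)] at this
  change |(∫ t, cutoff R t * _) - ∫ t, cutoff R t * _| ≤ _
  rw [hEulerCl.integral_cutoff_mul_flux_sub hP hslip (by linarith)]
  exact abs_setIntegral_pd₂_ramps_le hEuler hcurv (by linarith) hη hB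

/-- for steady flows in the strip with finite total curvature, the
cutoff boundary flux tends to zero as the cutoff parameter goes to infinity. -/
theorem statement18
    (v₁ v₂ P : ℝ × ℝ → ℝ)
    (hv₁ : ContDiff ℝ 1 v₁) (hv₂ : ContDiff ℝ 1 v₂) (hP : ContDiff ℝ 1 P)
    (hEuler : EulerOn v₁ v₂ P strip)
    (hslip : ∀ t : ℝ, v₂ (t, 1) = 0 ∧ v₂ (t, -1) = 0)
    (C : ℝ) (hC : 0 < C)
    (hgrow : ∀ R : ℝ, R > 100 → ∀ x ∈ stripCl, |x.1| ≤ R →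
      nrm (v₁ x) (v₂ x) ≤ C * Real.sqrt R)
    (hfin : ∫⁻ x in strip, ENNReal.ofReal (curv v₁ v₂ x) ∂volume < ⊤) :
    Tendsto
      (fun R : ℝ =>
        (∫ t : ℝ, min (1 : ℝ) (max 0 (2 - |t| / R)) * (v₁ (t, 1) * pd₂ v₂ (t, 1))) -
        ∫ t : ℝ, min (1 : ℝ) (max 0 (2 - |t| / R)) * (v₁ (t, -1) * pd₂ v₂ (t, -1)))
      atTop (nhds 0) :=
  statement18_general v₁ v₂ P hv₁ hv₂ hP hEuler hslip C hgrow hfin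
end
end
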